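/- Define η_CB(s; z) := Σ_{m=0}^∞ (2z)^{2m+1}/(binom(2m+1,m+1/2)·(m+1/2)^s) where binom(2m+1,m+1/2) = Γ(2m+2)/Γ(m+3/2)². For every integer n ≥ −1 and real z with |z| < 1, η_CB(−n; z) = (π/2) · z·q_n(z²) / (2^n (1−z²)^{n+3/2}), where q_n are Lehmer's polynomials (q_{−1}=1, q_{n+1}(x) = (2(n+1)x+1)q_n(x) + 2x(1−x)q_n'(x)). -/

import Mathlib

open Polynomial

/-- Lehmer's polynomials `q_n` for `n ≥ -1`, indexed so that `lehmerQ (n+1) = q_n`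
(`lehmerQ 0 = q_{-1} = 1`), with recurrence
`q_{n+1}(x) = (2(n+1)x + 1) q_n(x) + 2x(1-x) q_n'(x)`. -/
noncomputable def lehmerQ : ℕ → Polynomial ℤ
  | 0 => 1
  | (k + 1) => (C (2 * (k : ℤ)) * X + 1) * lehmerQ k
      + 2 * X * (1 - X) * derivative (lehmerQ k)

/-- Lehmer's polynomials `p_n` for `n ≥ -1`, indexed so that `lehmerP (n+1) = p_n`
(`lehmerP 0 = p_{-1} = 0`), with recurrence
`p_{n+1}(x) = 2(nx + 1) p_n(x) + 2x(1-x) p_n'(x) + q_n(x)`. -/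
noncomputable def lehmerP : ℕ → Polynomial ℤ
  | 0 => 0
  | (k + 1) => 2 * (C ((k : ℤ) - 1) * X + 1) * lehmerP k
      + 2 * X * (1 - X) * derivative (lehmerP k) + lehmerQ k

/-- The half-integer binomial coefficient `binom(2m+1, m+1/2) = Γ(2m+2)/Γ(m+3/2)²`. -/
noncomputable def halfBinom (m : ℕ) : ℝ :=
  Real.Gamma (2 * m + 2) / (Real.Gamma ((m : ℝ) + 3 / 2)) ^ 2

/-!
Via Legendre's duplication formula, `(2z)^(2m+1) / binom(2m+1, m+1/2) = π (m + 1/2) a_m z^(2m+1)`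
with `a_m = binom(2m, m) / 4^m`, the coefficients of the binomial series of `(1 - t)^(-1/2)`.
Hence `η_CB(1; z) = π z (1 - z²)^(-1/2)`, and each further factor `m + 1/2` is produced by
applying `(z/2) d/dz` termwise; Lehmer's recurrence for `q_n` is exactly what this operator does
to `z q_n(z²) / (2^n (1 - z²)^(n + 3/2))`.
-/

noncomputable def centralBinomRatio (m : ℕ) : ℝ := m.centralBinom / 4 ^ m

lemma centralBinomRatio_nonneg (m : ℕ) : 0 ≤ centralBinomRatio m := by
  unfold centralBinomRatio; positivity

lemma centralBinomRatio_le_one (m : ℕ) : centralBinomRatio m ≤ 1 := by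
  rw [centralBinomRatio, div_le_one (by positivity)]
  exact_mod_cast Nat.centralBinom_le_four_pow m

lemma centralBinomRatio_succ (m : ℕ) :
    ((m : ℝ) + 1) * centralBinomRatio (m + 1) = (m + 1 / 2) * centralBinomRatio m := by
  have h : ((m : ℝ) + 1) * (m + 1).centralBinom = 2 * (2 * m + 1) * m.centralBinom := by
    exact_mod_cast Nat.succ_mul_centralBinom_succ m
  simp only [centralBinomRatio, pow_succ]
  field_simp
  linear_combination 2 * h

lemma multichoose_one_half (m : ℕ) : Ring.multichoose (1 / 2 : ℝ) m = centralBinomRatio m := by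
  have hpoch : ∀ m : ℕ, (m.factorial : ℝ) * Ring.multichoose (1 / 2 : ℝ) m =
      (ascPochhammer ℝ m).eval (1 / 2) := fun m => by
    rw [← nsmul_eq_mul, Ring.factorial_nsmul_multichoose_eq_ascPochhammer,
      ascPochhammer_smeval_eq_eval]
  induction m with
  | zero => simp [centralBinomRatio]
  | succ m ih =>
    have h := hpoch (m + 1)
    rw [ascPochhammer_succ_eval, ← hpoch m, ih, Nat.factorial_succ] at h
    push_cast at h
    apply mul_left_cancel₀ (show (m.factorial : ℝ) * (m + 1) ≠ 0 by positivity)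
    linear_combination h - m.factorial * centralBinomRatio_succ m

lemma hasSum_centralBinomRatio_mul_pow {t : ℝ} (ht : |t| < 1) :
    HasSum (fun m => centralBinomRatio m * t ^ m) (1 / (1 - t) ^ (1 / 2 : ℝ)) := by
  have h := (Real.one_div_one_sub_rpow_hasFPowerSeriesOnBall_zero (1 / 2)).hasSum
    (y := t) (by simpa [enorm_eq_nnnorm, ← NNReal.coe_lt_one] using ht)
  simpa only [FormalMultilinearSeries.ofScalars_apply_eq, zero_add, smul_eq_mul,
    ← Ring.multichoose_eq, multichoose_one_half] using h

open Real Nat in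
lemma Gamma_nat_add_three_halves (m : ℕ) :
    Gamma ((m : ℝ) + 3 / 2) = (2 * m + 1)! * √π / (2 ^ (2 * m + 1) * m !) := by
  have hdup := Gamma_mul_Gamma_add_half ((m : ℝ) + 1)
  have h2 : (2 : ℝ) ^ (1 - (((2 * m + 1 : ℕ) : ℝ) + 1)) = (2 ^ (2 * m + 1))⁻¹ := by
    rw [← Real.rpow_natCast, ← Real.rpow_neg zero_le_two]
    push_cast; ring_nf
  rw [Gamma_nat_eq_factorial,
    show 2 * ((m : ℝ) + 1) = ((2 * m + 1 : ℕ) : ℝ) + 1 by push_cast; ring,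
    Gamma_nat_eq_factorial, h2, add_assoc, show (1 : ℝ) + 1 / 2 = 3 / 2 by norm_num] at hdup
  rw [eq_div_iff (by positivity), mul_comm (2 ^ _), ← mul_assoc, mul_comm (Gamma _), hdup]
  field_simp

open Real Nat in
lemma two_pow_div_halfBinom (m : ℕ) :
    2 ^ (2 * m + 1) / halfBinom m = π * ((m + 1 / 2) * centralBinomRatio m) := by
  have hfac : ((2 * m + 1)! : ℝ) = (2 * m + 1) * (m.centralBinom * m ! * m !) := by
    rw [Nat.factorial_succ, centralBinom,
      ← Nat.choose_mul_factorial_mul_factorial (by omega : m ≤ 2 * m),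
      show 2 * m - m = m by omega]
    push_cast; ring
  rw [halfBinom, Gamma_nat_add_three_halves, div_pow, mul_pow, sq_sqrt pi_pos.le,
    show 2 * (m : ℝ) + 2 = ((2 * m + 1 : ℕ) : ℝ) + 1 by push_cast; ring,
    Gamma_nat_eq_factorial,
    centralBinomRatio, hfac]
  have : (4 : ℝ) ^ m * 2 = 2 ^ (2 * m + 1) := by rw [pow_succ, pow_mul]; norm_num
  field_simp
  rw [← this]
  ring

lemma summable_add_one_pow_mul_geometric (k : ℕ) {s : ℝ} (hs₀ : 0 ≤ s) (hs₁ : s < 1) :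
    Summable (fun m : ℕ => ((m : ℝ) + 1) ^ k * s ^ m) := by
  refine (summable_descFactorial_mul_geometric_of_norm_lt_one k
    (by rwa [Real.norm_of_nonneg hs₀])).of_nonneg_of_le (fun m => by positivity) fun m => ?_
  gcongr
  have h := Nat.pow_sub_le_descFactorial (m + k) k
  rw [show m + k + 1 - k = m + 1 by omega] at h
  exact_mod_cast h

lemma hasSum_mul_add_half_of_hasSum {c : ℕ → ℝ} {k : ℕ}
    (hc : ∀ m, |c m| ≤ ((m : ℝ) + 1) ^ k)
    {F : ℝ → ℝ} (hF : ∀ y, |y| < 1 → HasSum (fun m => c m * y ^ (2 * m + 1)) (F y))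
    {z : ℝ} (hz : |z| < 1) :
    HasSum (fun m => c m * ((m : ℝ) + 1 / 2) * z ^ (2 * m + 1)) (z / 2 * deriv F z) := by
  obtain ⟨r, hzr, hr₁⟩ := exists_between hz
  have hr₀ : 0 ≤ r := (abs_nonneg z).trans hzr.le
  have hball : ∀ y ∈ Metric.ball (0 : ℝ) r, |y| < r := by simp
  have hzball : z ∈ Metric.ball (0 : ℝ) r := by simpa using hzr
  set g' : ℕ → ℝ → ℝ := fun m y => c m * ((2 * m + 1) * y ^ (2 * m))
  have hderiv : ∀ m y, y ∈ Metric.ball (0 : ℝ) r →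
      HasDerivAt (fun y => c m * y ^ (2 * m + 1)) (g' m y) y := fun m y _ => by
    simpa [g'] using (hasDerivAt_pow (2 * m + 1) y).const_mul (c m)
  have hbound : ∀ m y, y ∈ Metric.ball (0 : ℝ) r →
      ‖g' m y‖ ≤ 2 * (((m : ℝ) + 1) ^ (k + 1) * (r ^ 2) ^ m) := fun m y hy => by
    calc ‖g' m y‖ = |c m| * ((2 * m + 1) * |y| ^ (2 * m)) := by
          simp [g', abs_of_nonneg (by positivity : (0 : ℝ) ≤ 2 * m + 1)]
      _ ≤ ((m : ℝ) + 1) ^ k * ((2 * m + 2) * r ^ (2 * m)) := by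
          gcongr
          · exact hc m
          · linarith
          · exact (hball y hy).le
      _ = 2 * (((m : ℝ) + 1) ^ (k + 1) * (r ^ 2) ^ m) := by ring
  have hu : Summable (fun m : ℕ => 2 * (((m : ℝ) + 1) ^ (k + 1) * (r ^ 2) ^ m)) :=
    (summable_add_one_pow_mul_geometric (k + 1) (by positivity) (by nlinarith)).mul_left 2
  have hsum := hasDerivAt_tsum_of_isPreconnected hu Metric.isOpen_ball
    (convex_ball (0 : ℝ) r).isPreconnected hderiv hbound hzball (hF z hz).summable hzball
  have hFeq : (fun y => ∑' m, c m * y ^ (2 * m + 1)) =ᶠ[nhds z] F := by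
    filter_upwards [Metric.isOpen_ball.mem_nhds hzball] with y hy
    exact (hF y ((hball y hy).trans hr₁)).tsum_eq
  rw [(hsum.congr_of_eventuallyEq hFeq.symm).deriv]
  have hterm : ∀ m : ℕ, c m * ((m : ℝ) + 1 / 2) * z ^ (2 * m + 1) = z / 2 * g' m z :=
    fun m => by simp only [g']; ring
  simpa only [hterm] using
    ((Summable.of_norm_bounded hu fun m => hbound m z hzball).hasSum).mul_left (z / 2)

lemma aeval_lehmerQ_succ (N : ℕ) (x : ℝ) :
    aeval x (lehmerQ (N + 1)) = (2 * N * x + 1) * aeval x (lehmerQ N)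
      + 2 * x * (1 - x) * aeval x (derivative (lehmerQ N)) := by
  simp [lehmerQ, map_ofNat]

noncomputable def lehmerClosedForm (N : ℕ) (z : ℝ) : ℝ :=
  z * aeval (z ^ 2) (lehmerQ N) / (2 ^ N * (1 - z ^ 2) ^ ((N : ℝ) + 1 / 2))

lemma half_mul_deriv_lehmerClosedForm (N : ℕ) {z : ℝ} (hz : |z| < 1) :
    z / 2 * deriv (lehmerClosedForm N) z = lehmerClosedForm (N + 1) z := by
  have hA : 0 < 1 - z ^ 2 := by nlinarith [sq_abs z, abs_nonneg z]
  have hsq : HasDerivAt (fun y : ℝ => y ^ 2) (2 * z) z := by simpa using hasDerivAt_pow 2 z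
  have hnum : HasDerivAt (fun y => y * aeval (y ^ 2) (lehmerQ N))
      (1 * aeval (z ^ 2) (lehmerQ N) + z * (aeval (z ^ 2) (derivative (lehmerQ N)) * (2 * z))) z :=
    (hasDerivAt_id z).mul
      (((lehmerQ N).hasDerivAt_aeval (z ^ 2)).comp z hsq (h₂ := fun x => aeval x (lehmerQ N)))
  have hden := ((hsq.const_sub 1).rpow_const (p := (N : ℝ) + 1 / 2) (Or.inl hA.ne')).const_mul
    ((2 : ℝ) ^ N)
  have hG : HasDerivAt (lehmerClosedForm N) _ z := hnum.div hden (by positivity)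
  have hpred : (1 - z ^ 2) ^ ((N : ℝ) + 1 / 2 - 1) =
      (1 - z ^ 2) ^ ((N : ℝ) + 1 / 2) / (1 - z ^ 2) :=
    Real.rpow_sub_one hA.ne' _
  have hsucc : (1 - z ^ 2) ^ (((N + 1 : ℕ) : ℝ) + 1 / 2) =
      (1 - z ^ 2) ^ ((N : ℝ) + 1 / 2) * (1 - z ^ 2) := by
    rw [← Real.rpow_add_one hA.ne']; push_cast; ring_nf
  rw [hG.deriv, lehmerClosedForm, aeval_lehmerQ_succ, hsucc, hpred]
  have hs : 0 < (1 - z ^ 2) ^ ((N : ℝ) + 1 / 2) := Real.rpow_pos_of_pos hA _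
  generalize (1 - z ^ 2) ^ ((N : ℝ) + 1 / 2) = s at hs ⊢
  field_simp
  ring

lemma hasSum_lehmerClosedForm (N : ℕ) {z : ℝ} (hz : |z| < 1) :
    HasSum (fun m => centralBinomRatio m * ((m : ℝ) + 1 / 2) ^ N * z ^ (2 * m + 1))
      (lehmerClosedForm N z) := by
  induction N generalizing z with
  | zero =>
    have hz2 : |z ^ 2| < 1 := by rw [abs_pow]; nlinarith [abs_nonneg z]
    have hterm : ∀ m : ℕ, z * (centralBinomRatio m * (z ^ 2) ^ m) =
        centralBinomRatio m * ((m : ℝ) + 1 / 2) ^ 0 * z ^ (2 * m + 1) := fun m => by ring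
    have hval : z * (1 / (1 - z ^ 2) ^ (1 / 2 : ℝ)) = lehmerClosedForm 0 z := by
      simp [lehmerClosedForm, lehmerQ, div_eq_mul_inv]
    simpa only [hterm, hval] using (hasSum_centralBinomRatio_mul_pow hz2).mul_left z
  | succ N ih =>
    have hc : ∀ m : ℕ,
        |centralBinomRatio m * ((m : ℝ) + 1 / 2) ^ N| ≤ ((m : ℝ) + 1) ^ N := by
      intro m
      rw [abs_of_nonneg (mul_nonneg (centralBinomRatio_nonneg m) (by positivity))]
      exact (mul_le_of_le_one_left (by positivity) (centralBinomRatio_le_one m)).trans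
        (pow_le_pow_left₀ (by positivity) (by linarith) N)
    have h := hasSum_mul_add_half_of_hasSum hc (fun y hy => ih hy) hz
    rw [half_mul_deriv_lehmerClosedForm N hz] at h
    simpa only [pow_succ, mul_assoc] using h

open Real in
lemma etaCB_term_eq (N : ℕ) (z : ℝ) (m : ℕ) :
    (2 * z) ^ (2 * m + 1) * ((m : ℝ) + 1 / 2) ^ ((N : ℤ) - 1) / halfBinom m =
      π * (centralBinomRatio m * ((m : ℝ) + 1 / 2) ^ N * z ^ (2 * m + 1)) := by
  have hm : (m : ℝ) + 1 / 2 ≠ 0 := by positivity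
  calc (2 * z) ^ (2 * m + 1) * ((m : ℝ) + 1 / 2) ^ ((N : ℤ) - 1) / halfBinom m
      = 2 ^ (2 * m + 1) / halfBinom m *
          (((m : ℝ) + 1 / 2) ^ N / (m + 1 / 2) * z ^ (2 * m + 1)) := by
        rw [zpow_sub_one₀ hm, zpow_natCast, mul_pow]; ring
    _ = _ := by rw [two_pow_div_halfBinom]; field_simp

theorem etaCB_neg_integer (n : ℤ) (hn : -1 ≤ n) (z : ℝ) (hz : |z| < 1) :
    ∑' m : ℕ, (2 * z) ^ (2 * m + 1) * ((m : ℝ) + 1 / 2) ^ n / halfBinom m =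
      Real.pi / 2 * (z * aeval (z ^ 2) (lehmerQ (n + 1).toNat)) /
        ((2 : ℝ) ^ n * (1 - z ^ 2) ^ ((n : ℝ) + 3 / 2)) := by
  obtain ⟨N, rfl⟩ : ∃ N : ℕ, n = N - 1 := ⟨(n + 1).toNat, by omega⟩
  rw [show ((N : ℤ) - 1 + 1).toNat = N by omega, tsum_congr (etaCB_term_eq N z),
    ((hasSum_lehmerClosedForm N hz).mul_left Real.pi).tsum_eq, lehmerClosedForm,
    zpow_sub_one₀ two_ne_zero, zpow_natCast]
  push_cast
  rw [show (N : ℝ) - 1 + 3 / 2 = N + 1 / 2 by ring]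
  field_simp
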